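/- arXiv:1507.01446 — 12 statements merged into one kernel-verified Lean document; each statement's English description precedes it below -/
import Mathlib

section
/- Let R be an associative unital ring and let a, b, c ∈ R. If a has a (b,c)-inverse, then b, c and t = c·a·b are all regular. -/
/-- `y` is a (b,c)-inverse of `a`. -/
def IsBCInverse {R : Type*} [Ring R] (a b c y : R) : Prop :=
  (∃ r, y = b * r * y) ∧ (∃ s, y = y * s * c) ∧ y * a * b = b ∧ c * a * y = c

namespace IsBCInverse

variable {R : Type*} [Ring R] {a b c y : R}

theorem regular_left (h : IsBCInverse a b c y) : ∃ x, b = b * x * b := by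
  obtain ⟨⟨r, hr⟩, -, hb, -⟩ := h
  refine ⟨r, ?_⟩
  calc b = y * a * b := hb.symm
    _ = b * r * y * a * b := by rw [← hr]
    _ = b * r * (y * a * b) := by simp only [mul_assoc]
    _ = b * r * b := by rw [hb]

theorem regular_right (h : IsBCInverse a b c y) : ∃ x, c = c * x * c := by
  obtain ⟨-, ⟨s, hs⟩, -, hc⟩ := h
  refine ⟨s, ?_⟩
  calc c = c * a * y := hc.symm
    _ = c * a * (y * s * c) := by rw [← hs]
    _ = (c * a * y) * s * c := by simp only [mul_assoc]
    _ = c * s * c := by rw [hc]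

theorem regular_mul_mul (h : IsBCInverse a b c y) :
    ∃ x, c * a * b = (c * a * b) * x * (c * a * b) := by
  obtain ⟨⟨r, hr⟩, ⟨s, hs⟩, hb, -⟩ := h
  refine ⟨r * y * s, ?_⟩
  calc c * a * b = c * a * (y * a * b) := by rw [hb]
    _ = c * a * (y * s * c) * a * b := by rw [← hs]; simp only [mul_assoc]
    _ = c * a * (b * r * y) * s * c * a * b := by rw [← hr]; simp only [mul_assoc]
    _ = (c * a * b) * (r * y * s) * (c * a * b) := by simp only [mul_assoc]

end IsBCInverse

/-- If `a` has a (b,c)-inverse, then `b`, `c` and `t = c·a·b` are regular. -/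
theorem regular_of_bc_invertible {R : Type*} [Ring R] (a b c : R)
    (h : ∃ y, IsBCInverse a b c y) :
    (∃ x, b = b * x * b) ∧ (∃ x, c = c * x * c) ∧
    (∃ x, c * a * b = (c * a * b) * x * (c * a * b)) := by
  obtain ⟨y, hy⟩ := h
  exact ⟨hy.regular_left, hy.regular_right, hy.regular_mul_mul⟩
end

section
/- Let R be an associative unital ring, let a, b, c ∈ R, and suppose t = c·a·b is regular. Then the following statements are equivalent: (i) a has a (b,c)-inverse; (ii) r(a) ∩ bR = {0} and R = (a·b)R ⊕ r(c) (i.e., every x ∈ R can be written x = a·b·u + v with c·v = 0, and (a·b)R ∩ r(c) = {0}); (iii) r(t) = r(b) and tR = cR; (iv) l(t) = l(c) and Rt = Rb; (v) l(t) = l(c) and r(t) = r(b). -/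
section Definitions

variable {R : Type*}

def rAnn [Mul R] [Zero R] (a : R) : Set R := {x | a * x = 0}

def lAnn [Mul R] [Zero R] (a : R) : Set R := {x | x * a = 0}

def principalRightIdeal [Mul R] (a : R) : Set R := {x | ∃ u, x = a * u}

def principalLeftIdeal [Mul R] (a : R) : Set R := {x | ∃ u, x = u * a}

end Definitions

section Inclusions

variable {R : Type*}

theorem lAnn_subset_of_mem_principalRightIdeal [SemigroupWithZero R] {a b : R}
    (h : a ∈ principalRightIdeal b) : lAnn b ⊆ lAnn a := by
  obtain ⟨u, rfl⟩ := h
  intro z (hz : z * b = 0)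
  show z * (b * u) = 0
  rw [← mul_assoc, hz, zero_mul]

theorem rAnn_subset_of_mem_principalLeftIdeal [SemigroupWithZero R] {a b : R}
    (h : a ∈ principalLeftIdeal b) : rAnn b ⊆ rAnn a := by
  obtain ⟨u, rfl⟩ := h
  intro z (hz : b * z = 0)
  show u * b * z = 0
  rw [mul_assoc, hz, mul_zero]

theorem principalRightIdeal_subset_iff [Monoid R] {a b : R} :
    principalRightIdeal a ⊆ principalRightIdeal b ↔ a ∈ principalRightIdeal b := by
  refine ⟨fun h => h ⟨1, (mul_one a).symm⟩, ?_⟩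
  rintro ⟨v, rfl⟩ _ ⟨u, rfl⟩
  exact ⟨v * u, mul_assoc b v u⟩

theorem principalLeftIdeal_subset_iff [Monoid R] {a b : R} :
    principalLeftIdeal a ⊆ principalLeftIdeal b ↔ a ∈ principalLeftIdeal b := by
  refine ⟨fun h => h ⟨1, (one_mul a).symm⟩, ?_⟩
  rintro ⟨v, rfl⟩ _ ⟨u, rfl⟩
  exact ⟨u * v, (mul_assoc u v b).symm⟩

theorem principalRightIdeal_eq_iff_mem [Monoid R] {t c : R} (htc : t ∈ principalRightIdeal c) :
    principalRightIdeal t = principalRightIdeal c ↔ c ∈ principalRightIdeal t := by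
  rw [← principalRightIdeal_subset_iff]
  exact (principalRightIdeal_subset_iff.mpr htc).ge_iff_eq.symm

theorem principalLeftIdeal_eq_iff_mem [Monoid R] {t b : R} (htb : t ∈ principalLeftIdeal b) :
    principalLeftIdeal t = principalLeftIdeal b ↔ b ∈ principalLeftIdeal t := by
  rw [← principalLeftIdeal_subset_iff]
  exact (principalLeftIdeal_subset_iff.mpr htb).ge_iff_eq.symm

end Inclusions

section Regular

variable {R : Type*}

theorem mul_mul_eq_of_mem_principalRightIdeal [Semigroup R] {t x c : R} (hreg : t * x * t = t)
    (hc : c ∈ principalRightIdeal t) : t * x * c = c := by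
  obtain ⟨q, rfl⟩ := hc
  rw [← mul_assoc, hreg]

theorem mul_mul_eq_of_mem_principalLeftIdeal [Semigroup R] {t x b : R} (hreg : t * x * t = t)
    (hb : b ∈ principalLeftIdeal t) : b * x * t = b := by
  obtain ⟨p, rfl⟩ := hb
  rw [mul_assoc p, mul_assoc p, hreg]

variable [Ring R] {t x : R}

theorem mem_principalRightIdeal_iff_lAnn_subset (hreg : t * x * t = t) {c : R} :
    c ∈ principalRightIdeal t ↔ lAnn t ⊆ lAnn c := by
  refine ⟨lAnn_subset_of_mem_principalRightIdeal, fun h => ⟨x * c, ?_⟩⟩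
  have hker : (1 - t * x) * t = 0 := by rw [sub_mul, one_mul, hreg, sub_self]
  have : (1 - t * x) * c = 0 := h hker
  rw [sub_mul, one_mul, sub_eq_zero] at this
  rw [← mul_assoc, ← this]

theorem mem_principalLeftIdeal_iff_rAnn_subset (hreg : t * x * t = t) {b : R} :
    b ∈ principalLeftIdeal t ↔ rAnn t ⊆ rAnn b := by
  refine ⟨rAnn_subset_of_mem_principalLeftIdeal, fun h => ⟨b * x, ?_⟩⟩
  have hker : t * (x * t - 1) = 0 := by rw [mul_sub, mul_one, ← mul_assoc, hreg, sub_self]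
  have : b * (x * t - 1) = 0 := h hker
  rw [mul_sub, mul_one, sub_eq_zero] at this
  rw [mul_assoc, this]

theorem lAnn_eq_iff_mem_principalRightIdeal (hreg : t * x * t = t) {c : R}
    (htc : t ∈ principalRightIdeal c) : lAnn t = lAnn c ↔ c ∈ principalRightIdeal t := by
  rw [mem_principalRightIdeal_iff_lAnn_subset hreg]
  exact (lAnn_subset_of_mem_principalRightIdeal htc).ge_iff_eq'.symm

theorem rAnn_eq_iff_mem_principalLeftIdeal (hreg : t * x * t = t) {b : R}
    (htb : t ∈ principalLeftIdeal b) : rAnn t = rAnn b ↔ b ∈ principalLeftIdeal t := by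
  rw [mem_principalLeftIdeal_iff_rAnn_subset hreg]
  exact (rAnn_subset_of_mem_principalLeftIdeal htb).ge_iff_eq'.symm

end Regular

section DirectSum

variable {R : Type*}

theorem inter_eq_zero_and_inter_eq_zero_iff_rAnn_subset [SemigroupWithZero R] (a b c : R) :
    rAnn a ∩ principalRightIdeal b = {0} ∧ principalRightIdeal (a * b) ∩ rAnn c = {0} ↔
      rAnn (c * a * b) ⊆ rAnn b := by
  simp only [Set.eq_singleton_iff_unique_mem]
  constructor
  · rintro ⟨⟨-, hab⟩, -, hbc⟩ z (hz : c * a * b * z = 0)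
    have habz : a * b * z = 0 :=
      hbc _ ⟨⟨z, rfl⟩, show c * (a * b * z) = 0 by simpa only [mul_assoc] using hz⟩
    exact hab _ ⟨show a * (b * z) = 0 by rwa [← mul_assoc], z, rfl⟩
  · intro h
    refine ⟨⟨⟨mul_zero a, 0, (mul_zero b).symm⟩, ?_⟩,
      ⟨⟨0, (mul_zero _).symm⟩, mul_zero c⟩, ?_⟩
    · rintro _ ⟨hz, u, rfl⟩
      exact h (show c * a * b * u = 0 by
        rw [mul_assoc, mul_assoc, show a * (b * u) = 0 from hz, mul_zero])
    · rintro _ ⟨⟨u, rfl⟩, (hz : c * (a * b * u) = 0)⟩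
      have hbu : b * u = 0 := h (show c * a * b * u = 0 by simpa only [mul_assoc] using hz)
      rw [mul_assoc, hbu, mul_zero]

theorem forall_eq_mul_add_iff_mem_principalRightIdeal [Ring R] (a b c : R) :
    (∀ x : R, ∃ u v, x = a * b * u + v ∧ c * v = 0) ↔
      c ∈ principalRightIdeal (c * a * b) := by
  constructor
  · intro h
    obtain ⟨u, v, h1, hv⟩ := h 1
    refine ⟨u, ?_⟩
    calc c = c * (a * b * u + v) := by rw [← h1, mul_one]
      _ = c * a * b * u := by rw [mul_add, hv, add_zero]; simp only [mul_assoc]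
  · rintro ⟨q, hq⟩ x
    refine ⟨q * x, x - a * b * (q * x), by abel, ?_⟩
    rw [mul_sub, sub_eq_zero]
    calc c * x = c * a * b * q * x := by rw [← hq]
      _ = c * (a * b * (q * x)) := by simp only [mul_assoc]

end DirectSum

namespace IsBCInverse

variable {R : Type*} [Ring R] {a b c y : R}

theorem mem_principalLeftIdeal (h : IsBCInverse a b c y) :
    b ∈ principalLeftIdeal (c * a * b) := by
  obtain ⟨-, ⟨s, hs⟩, hyab, -⟩ := h
  refine ⟨y * s, ?_⟩
  calc b = y * a * b := hyab.symm
    _ = y * s * c * a * b := by rw [← hs]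
    _ = y * s * (c * a * b) := by simp only [mul_assoc]

theorem mem_principalRightIdeal (h : IsBCInverse a b c y) :
    c ∈ principalRightIdeal (c * a * b) := by
  obtain ⟨⟨r, hr⟩, -, -, hcay⟩ := h
  refine ⟨r * y, ?_⟩
  calc c = c * a * y := hcay.symm
    _ = c * a * (b * r * y) := by rw [← hr]
    _ = c * a * b * (r * y) := by simp only [mul_assoc]

end IsBCInverse

section BCInverse

variable {R : Type*} [Ring R] {a b c x : R}

theorem isBCInverse_mul_mul (hreg : c * a * b * x * (c * a * b) = c * a * b)
    (hb : b ∈ principalLeftIdeal (c * a * b)) (hc : c ∈ principalRightIdeal (c * a * b)) :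
    IsBCInverse a b c (b * x * c) := by
  have hbt : b * x * (c * a * b) = b := mul_mul_eq_of_mem_principalLeftIdeal hreg hb
  have htc : c * a * b * x * c = c := mul_mul_eq_of_mem_principalRightIdeal hreg hc
  refine ⟨⟨x * c * a, ?_⟩, ⟨a * b * x, ?_⟩, ?_, ?_⟩
  · calc b * x * c = b * x * (c * a * b * x * c) := by rw [htc]
      _ = b * (x * c * a) * (b * x * c) := by simp only [mul_assoc]
  · calc b * x * c = b * x * (c * a * b) * x * c := by rw [hbt]
      _ = b * x * c * (a * b * x) * c := by simp only [mul_assoc]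
  · calc b * x * c * a * b = b * x * (c * a * b) := by simp only [mul_assoc]
      _ = b := hbt
  · calc c * a * (b * x * c) = c * a * b * x * c := by simp only [mul_assoc]
      _ = c := htc

theorem exists_isBCInverse_iff (hreg : c * a * b * x * (c * a * b) = c * a * b) :
    (∃ y, IsBCInverse a b c y) ↔
      b ∈ principalLeftIdeal (c * a * b) ∧ c ∈ principalRightIdeal (c * a * b) :=
  ⟨fun ⟨_, h⟩ => ⟨h.mem_principalLeftIdeal, h.mem_principalRightIdeal⟩,
    fun ⟨hb, hc⟩ => ⟨_, isBCInverse_mul_mul hreg hb hc⟩⟩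

theorem directSum_conditions_iff (hreg : c * a * b * x * (c * a * b) = c * a * b) :
    (rAnn a ∩ principalRightIdeal b = {0} ∧
        (∀ z : R, ∃ u v, z = a * b * u + v ∧ c * v = 0) ∧
        principalRightIdeal (a * b) ∩ rAnn c = {0}) ↔
      b ∈ principalLeftIdeal (c * a * b) ∧ c ∈ principalRightIdeal (c * a * b) := by
  rw [mem_principalLeftIdeal_iff_rAnn_subset hreg,
    ← inter_eq_zero_and_inter_eq_zero_iff_rAnn_subset,
    ← forall_eq_mul_add_iff_mem_principalRightIdeal]
  tauto

end BCInverse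

/-- If `t = c·a·b` is regular, then (i)–(v) are equivalent. -/
theorem exists_bc_inverse_tfae {R : Type*} [Ring R] (a b c : R)
    (ht : ∃ x, c * a * b = (c * a * b) * x * (c * a * b)) :
    List.TFAE
      [ (∃ y, IsBCInverse a b c y),
        ({x : R | a * x = 0} ∩ {x : R | ∃ u, x = b * u} = {0}) ∧
          (∀ x : R, ∃ u v, x = a * b * u + v ∧ c * v = 0) ∧
          ({x : R | ∃ u, x = a * b * u} ∩ {x : R | c * x = 0} = {0}),
        ({x : R | c * a * b * x = 0} = {x : R | b * x = 0}) ∧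
          ({x : R | ∃ u, x = c * a * b * u} = {x : R | ∃ u, x = c * u}),
        ({x : R | x * (c * a * b) = 0} = {x : R | x * c = 0}) ∧
          ({x : R | ∃ u, x = u * (c * a * b)} = {x : R | ∃ u, x = u * b}),
        ({x : R | x * (c * a * b) = 0} = {x : R | x * c = 0}) ∧
          ({x : R | c * a * b * x = 0} = {x : R | b * x = 0}) ] := by
  obtain ⟨x, hx⟩ := ht
  have hreg : c * a * b * x * (c * a * b) = c * a * b := hx.symm
  have htc : c * a * b ∈ principalRightIdeal c := ⟨a * b, mul_assoc c a b⟩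
  have htb : c * a * b ∈ principalLeftIdeal b := ⟨c * a, rfl⟩
  have hl := lAnn_eq_iff_mem_principalRightIdeal hreg htc
  have hr := rAnn_eq_iff_mem_principalLeftIdeal hreg htb
  apply List.tfae_of_forall
    (b ∈ principalLeftIdeal (c * a * b) ∧ c ∈ principalRightIdeal (c * a * b))
  simp only [List.mem_cons, List.not_mem_nil, or_false]
  rintro P (rfl | rfl | rfl | rfl | rfl)
  · exact exists_isBCInverse_iff hreg
  · exact directSum_conditions_iff hreg
  · exact hr.and (principalRightIdeal_eq_iff_mem htc)
  · exact (hl.and (principalLeftIdeal_eq_iff_mem htb)).trans and_comm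
  · exact (hl.and hr).trans and_comm
end

section
/- Let R be an associative unital ring, let a, b, c, y ∈ R, and suppose t = c·a·b is regular. Then the following statements are equivalent: (i) y is the (b,c)-inverse of a; (ii) y is a hybrid (b,c)-inverse of a; (iii) y is an annihilator (b,c)-inverse of a. -/
/-- `y` is a hybrid (b,c)-inverse of `a`: `y·a·y = y`, `yR = bR`, `r(y) = r(c)`. -/
def IsHybridBCInverse {R : Type*} [Ring R] (a b c y : R) : Prop :=
  y * a * y = y ∧ ({x : R | ∃ u, x = y * u} = {x : R | ∃ u, x = b * u}) ∧
    ({x : R | y * x = 0} = {x : R | c * x = 0})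

/-- `y` is an annihilator (b,c)-inverse of `a`: `y·a·y = y`, `l(y) = l(b)`, `r(y) = r(c)`. -/
def IsAnnihilatorBCInverse {R : Type*} [Ring R] (a b c y : R) : Prop :=
  y * a * y = y ∧ ({x : R | x * y = 0} = {x : R | x * b = 0}) ∧
    ({x : R | y * x = 0} = {x : R | c * x = 0})

/-!
Mutual divisibility `b ∣ y ∣ b` gives `yR = bR` and `l(y) = l(b)`, and `y ∈ Rc`, `c ∈ Ry` give
`r(y) = r(c)`; this yields (i) ⇒ (ii) ⇒ (iii). Conversely, for an annihilator (b,c)-inverse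
`1 - y a` and `a y - 1` kill `y` on one side, hence `b`, resp. `c`, which yields
`y a b = b` and `c a y = c`. If `x` is an inner inverse of `t = c a b`, then `c a - t x c a` kills
`b`, hence `y`, so `c = t x c`; then `a (y - b x c)` is killed by `c`, hence by `y`, so
`y = b x c ∈ bR ∩ Rc`.
-/

section Semigroup

variable {S : Type*} [Semigroup S]

theorem setOf_dvd_eq_of_dvd_of_dvd {y b : S} (hby : b ∣ y) (hyb : y ∣ b) :
    {x : S | ∃ u, x = y * u} = {x : S | ∃ u, x = b * u} :=
  Set.ext fun _ => ⟨hby.trans, hyb.trans⟩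

end Semigroup

section SemigroupWithZero

variable {S : Type*} [SemigroupWithZero S] {y b : S}

theorem setOf_mul_eq_zero_subset_left_of_dvd (h : y ∣ b) :
    {x : S | x * y = 0} ⊆ {x : S | x * b = 0} := by
  rintro x (hx : x * y = 0)
  obtain ⟨u, rfl⟩ := h
  show x * (y * u) = 0
  rw [← mul_assoc, hx, zero_mul]

theorem setOf_mul_eq_zero_subset_right_of_eq_mul {v : S} (h : b = v * y) :
    {x : S | y * x = 0} ⊆ {x : S | b * x = 0} := by
  rintro x (hx : y * x = 0)
  show b * x = 0
  rw [h, mul_assoc, hx, mul_zero]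

end SemigroupWithZero

section NonUnitalRing

variable {R : Type*} [NonUnitalRing R] {a b c y x : R}

theorem eq_mul_mul_of_regular_of_setOf_mul_eq_zero_subset
    (hx : c * a * b = c * a * b * x * (c * a * b)) (hc : c * a * y = c)
    (hl : {z : R | z * b = 0} ⊆ {z : R | z * y = 0}) :
    c = c * a * b * x * c := by
  have hb : (c * a - c * a * b * x * (c * a)) * b = 0 :=
    calc (c * a - c * a * b * x * (c * a)) * b = c * a * b - c * a * b * x * (c * a * b) := by
          noncomm_ring
      _ = 0 := by rw [← hx, sub_self]
  rw [← sub_eq_zero]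
  calc c - c * a * b * x * c = c * a * y - c * a * b * x * (c * a * y) := by rw [hc]
    _ = (c * a - c * a * b * x * (c * a)) * y := by noncomm_ring
    _ = 0 := hl hb

theorem eq_mul_mul_of_setOf_mul_eq_zero_subset (hyay : y * a * y = y) (hb : y * a * b = b)
    (hc : c * a * y = c) (hcx : c = c * a * b * x * c)
    (hr : {z : R | c * z = 0} ⊆ {z : R | y * z = 0}) :
    y = b * x * c := by
  have hc' : c * (a * (y - b * x * c)) = 0 :=
    calc c * (a * (y - b * x * c)) = c * a * y - c * a * b * x * c := by noncomm_ring
      _ = 0 := by rw [hc, ← hcx, sub_self]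
  rw [← sub_eq_zero]
  calc y - b * x * c = y * a * y - y * a * b * x * c := by rw [hyay, hb]
    _ = y * (a * (y - b * x * c)) := by noncomm_ring
    _ = 0 := hr hc'

end NonUnitalRing

section Ring

variable {R : Type*} [Ring R] {a b c y : R}

theorem mul_mul_eq_of_setOf_mul_eq_zero_subset_left (hyay : y * a * y = y)
    (h : {x : R | x * y = 0} ⊆ {x : R | x * b = 0}) : y * a * b = b := by
  have : (1 - y * a) * b = 0 :=
    h (show (1 - y * a) * y = 0 by rw [sub_mul, one_mul, hyay, sub_self])
  rwa [sub_mul, one_mul, sub_eq_zero, eq_comm] at this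

theorem mul_mul_eq_of_setOf_mul_eq_zero_subset_right (hyay : y * a * y = y)
    (h : {x : R | y * x = 0} ⊆ {x : R | c * x = 0}) : c * a * y = c := by
  have : c * (a * y - 1) = 0 :=
    h (show y * (a * y - 1) = 0 by rw [mul_sub, mul_one, ← mul_assoc, hyay, sub_self])
  rwa [mul_sub, mul_one, sub_eq_zero, ← mul_assoc] at this

theorem IsBCInverse.isHybridBCInverse (h : IsBCInverse a b c y) : IsHybridBCInverse a b c y := by
  obtain ⟨⟨r, hr⟩, ⟨s, hs⟩, hb, hc⟩ := h
  have hby : b ∣ y := ⟨r * y, by rw [← mul_assoc, ← hr]⟩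
  have hyb : y ∣ b := ⟨a * b, by rw [← mul_assoc, hb]⟩
  refine ⟨?_, setOf_dvd_eq_of_dvd_of_dvd hby hyb, ?_⟩
  · calc y * a * y = y * a * (b * r * y) := by rw [← hr]
      _ = y * a * b * r * y := by noncomm_ring
      _ = y := by rw [hb, ← hr]
  · exact (setOf_mul_eq_zero_subset_right_of_eq_mul hc.symm).antisymm
      (setOf_mul_eq_zero_subset_right_of_eq_mul hs)

theorem IsHybridBCInverse.isAnnihilatorBCInverse (h : IsHybridBCInverse a b c y) :
    IsAnnihilatorBCInverse a b c y := by
  obtain ⟨hyay, hideal, hr⟩ := h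
  have hby : b ∣ y := hideal.subset (dvd_refl y)
  have hyb : y ∣ b := hideal.symm.subset (dvd_refl b)
  exact ⟨hyay, (setOf_mul_eq_zero_subset_left_of_dvd hyb).antisymm
    (setOf_mul_eq_zero_subset_left_of_dvd hby), hr⟩

theorem IsAnnihilatorBCInverse.isBCInverse (h : IsAnnihilatorBCInverse a b c y)
    (ht : ∃ x, c * a * b = (c * a * b) * x * (c * a * b)) : IsBCInverse a b c y := by
  obtain ⟨hyay, hl, hr⟩ := h
  obtain ⟨x, hx⟩ := ht
  have hb := mul_mul_eq_of_setOf_mul_eq_zero_subset_left hyay hl.subset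
  have hc := mul_mul_eq_of_setOf_mul_eq_zero_subset_right hyay hr.subset
  have hcx := eq_mul_mul_of_regular_of_setOf_mul_eq_zero_subset hx hc hl.symm.subset
  have hy := eq_mul_mul_of_setOf_mul_eq_zero_subset hyay hb hc hcx hr.symm.subset
  refine ⟨⟨x * c * a, ?_⟩, ⟨a * b * x, ?_⟩, hb, hc⟩
  · calc y = b * x * (c * a * y) := by rw [hc, ← hy]
      _ = b * (x * c * a) * y := by simp only [mul_assoc]
  · calc y = y * a * b * x * c := by rw [hb, ← hy]
      _ = y * (a * b * x) * c := by simp only [mul_assoc]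

end Ring

/-- If `t = c·a·b` is regular, then the (b,c)-inverse, the hybrid
(b,c)-inverse and the annihilator (b,c)-inverse notions coincide. -/
theorem bc_hybrid_annihilator_tfae {R : Type*} [Ring R] (a b c y : R)
    (ht : ∃ x, c * a * b = (c * a * b) * x * (c * a * b)) :
    List.TFAE
      [ IsBCInverse a b c y,
        IsHybridBCInverse a b c y,
        IsAnnihilatorBCInverse a b c y ] := by
  tfae_have 1 → 2 := IsBCInverse.isHybridBCInverse
  tfae_have 2 → 3 := IsHybridBCInverse.isAnnihilatorBCInverse
  tfae_have 3 → 1 := fun h => h.isBCInverse ht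
  tfae_finish
end

section
/- Let R be an associative unital ring, let a, b, c, d ∈ R, suppose y is the (b,c)-inverse of a, let b⁻ ∈ R satisfy b·b⁻·b = b, and set e = b·b⁻. Then the following statements are equivalent: (i) d has a (b,c)-inverse; (ii) e ∈ (e·y·d·e)R ∩ R(e·y·d·e); (iii) y·d·e + 1 − e is invertible in R. -/
section Corner

variable {R : Type*} [Ring R] {e w : R}

lemma add_one_sub_mul_add_one_sub (he : IsIdempotentElem e) {x : R} (hw : w * e = w)
    (hx : e * x = x) : (w + 1 - e) * (x + 1 - e) = w * x + 1 - e := by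
  have expand :
      (w + 1 - e) * (x + 1 - e) = w * x + (w - w * e) + (x - e * x) + 1 - e - e + e * e := by
    noncomm_ring
  rw [expand, hw, hx, he.eq]
  abel

lemma exists_corner_inverse_of_left_right (hwe : w * e = w) (hew : e * w = w)
    (hr : ∃ u, e = w * u) (hl : ∃ u, e = u * w) : ∃ v, w * v = e ∧ v * w = e := by
  obtain ⟨u, hu⟩ := hr
  obtain ⟨u', hu'⟩ := hl
  refine ⟨e * u, by rw [← mul_assoc, hwe, hu], ?_⟩
  calc e * u * w = u' * (w * u) * w := by rw [hu', mul_assoc u', mul_assoc u']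
    _ = e := by rw [← hu, mul_assoc, hew, hu']

lemma isUnit_add_one_sub_iff_exists_corner_inverse (he : IsIdempotentElem e) (hwe : w * e = w)
    (hew : e * w = w) : IsUnit (w + 1 - e) ↔ ∃ v, w * v = e ∧ v * w = e := by
  constructor
  · rintro ⟨t, ht⟩
    have hte : (t : R) * e = w := by
      rw [ht, sub_mul, add_mul, one_mul, hwe, he.eq, add_sub_cancel_right]
    have het : e * (t : R) = w := by
      rw [ht, mul_sub, mul_add, mul_one, hew, he.eq, add_sub_cancel_right]
    refine ⟨↑t⁻¹, ?_, ?_⟩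
    · rw [← het, mul_assoc, t.mul_inv, mul_one]
    · rw [← hte, ← mul_assoc, t.inv_mul, one_mul]
  · rintro ⟨v, hwv, hvw⟩
    have hx : e * (e * v * e) = e * v * e := by rw [← mul_assoc, ← mul_assoc, he.eq]
    have hx' : e * v * e * e = e * v * e := by rw [mul_assoc _ e e, he.eq]
    refine isUnit_iff_exists.mpr ⟨e * v * e + 1 - e, ?_, ?_⟩
    · rw [add_one_sub_mul_add_one_sub he hwe hx, ← mul_assoc, ← mul_assoc, hwe, hwv, he.eq,
        add_sub_cancel_left]
    · rw [add_one_sub_mul_add_one_sub he hx' hew, mul_assoc, hew, mul_assoc, hvw, he.eq,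
        add_sub_cancel_left]

end Corner

namespace IsBCInverse

variable {R : Type*} [Ring R] {a b c d y z bm : R}

lemma mul_mul_eq_of_isBCInverse (hy : IsBCInverse a b c y) (hz : IsBCInverse d b c z) :
    y * d * z = y := by
  obtain ⟨s, hs⟩ := hy.2.1
  calc y * d * z = y * s * (c * d * z) := by
        nth_rw 1 [hs]; simp only [mul_assoc]
    _ = y := by rw [hz.2.2.2, ← hs]

lemma mul_mul_eq_self (hy : IsBCInverse a b c y) (hbm : b * bm * b = b) : b * bm * y = y := by
  obtain ⟨r, hr⟩ := hy.1
  calc b * bm * y = b * bm * b * r * y := by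
        nth_rw 1 [hr]; simp only [mul_assoc]
    _ = y := by rw [hbm, ← hr]

lemma exists_corner_inverse (hy : IsBCInverse a b c y) (hz : IsBCInverse d b c z)
    (hbm : b * bm * b = b) :
    ∃ v, y * d * (b * bm) * v = b * bm ∧ v * (y * d * (b * bm)) = b * bm := by
  have hydz : y * d * (b * bm * z) = y := by
    rw [hz.mul_mul_eq_self hbm, hy.mul_mul_eq_of_isBCInverse hz]
  refine ⟨z * a * (b * bm), ?_, ?_⟩
  · calc y * d * (b * bm) * (z * a * (b * bm)) = y * d * (b * bm * z) * a * b * bm := by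
          simp only [mul_assoc]
      _ = b * bm := by rw [hydz, hy.2.2.1]
  · calc z * a * (b * bm) * (y * d * (b * bm)) = z * a * (b * bm * y) * d * b * bm := by
          simp only [mul_assoc]
      _ = b * bm := by
          rw [hy.mul_mul_eq_self hbm, hz.mul_mul_eq_of_isBCInverse hy, hz.2.2.1]

lemma of_corner_inverse {v : R} (hy : IsBCInverse a b c y) (hbm : b * bm * b = b)
    (hwv : y * d * (b * bm) * v = b * bm) (hvw : v * (y * d * (b * bm)) = b * bm) :
    IsBCInverse d b c (b * bm * v * y) := by
  obtain ⟨s, hs⟩ := hy.2.1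
  refine ⟨⟨bm, ?_⟩, ⟨s, ?_⟩, ?_, ?_⟩
  · calc b * bm * v * y = b * bm * b * bm * v * y := by rw [hbm]
      _ = b * bm * (b * bm * v * y) := by simp only [mul_assoc]
  · calc b * bm * v * y = b * bm * v * (y * s * c) := by conv_lhs => rw [hs]
      _ = b * bm * v * y * s * c := by simp only [mul_assoc]
  · calc b * bm * v * y * d * b = b * bm * v * y * d * (b * bm * b) := by rw [hbm]
      _ = b * bm * (v * (y * d * (b * bm))) * b := by simp only [mul_assoc]
      _ = b := by rw [hvw, ← mul_assoc (b * bm) b bm, hbm, hbm]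
  · calc c * d * (b * bm * v * y) = c * a * (y * d * (b * bm) * v) * y := by
          conv_lhs => rw [← hy.2.2.2]
          simp only [mul_assoc]
      _ = c := by rw [hwv, mul_assoc, hy.mul_mul_eq_self hbm, hy.2.2.2]

end IsBCInverse

/-- with `y = a^{‖(b,c)}` and `e = b·b⁻`, `d` has a (b,c)-inverse iff
`e ∈ (e·y·d·e)R ∩ R(e·y·d·e)` iff `y·d·e + 1 - e` is invertible. -/
theorem d_bc_inverse_tfae {R : Type*} [Ring R] (a b c d y bm : R)
    (hy : IsBCInverse a b c y) (hbm : b * bm * b = b) :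
    List.TFAE
      [ (∃ z, IsBCInverse d b c z),
        (∃ u, b * bm = (b * bm) * y * d * (b * bm) * u) ∧
          (∃ u, b * bm = u * ((b * bm) * y * d * (b * bm))),
        IsUnit (y * d * (b * bm) + 1 - b * bm) ] := by
  have he : IsIdempotentElem (b * bm) := by rw [IsIdempotentElem, ← mul_assoc, hbm]
  have hwe : y * d * (b * bm) * (b * bm) = y * d * (b * bm) := by rw [mul_assoc, he.eq]
  have hew : b * bm * (y * d * (b * bm)) = y * d * (b * bm) := by
    simp only [← mul_assoc, hy.mul_mul_eq_self hbm]
  simp only [hy.mul_mul_eq_self hbm]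
  tfae_have 1 → 2 := fun ⟨z, hz⟩ ↦
    let ⟨v, hwv, hvw⟩ := hy.exists_corner_inverse hz hbm
    ⟨⟨v, hwv.symm⟩, ⟨v, hvw.symm⟩⟩
  tfae_have 2 → 3 := fun ⟨hr, hl⟩ ↦
    (isUnit_add_one_sub_iff_exists_corner_inverse he hwe hew).mpr
      (exists_corner_inverse_of_left_right hwe hew hr hl)
  tfae_have 3 → 1 := fun hu ↦
    let ⟨_, hwv, hvw⟩ := (isUnit_add_one_sub_iff_exists_corner_inverse he hwe hew).mp hu
    ⟨_, hy.of_corner_inverse hbm hwv hvw⟩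
  tfae_finish
end

section
/- Let R be an associative unital ring, let a, b, c, d ∈ R, suppose y is the (b,c)-inverse of a, let b⁻ ∈ R satisfy b·b⁻·b = b, and set e = b·b⁻. If x = y·d·e + 1 − e is invertible in R, then x⁻¹·y is the (b,c)-inverse of d. -/
/-!
Put `e = b·b⁻`, an idempotent with `e·b = b` and `e·y = y`, and `z = x⁻¹·y`.
Since `x·e = e·x = y·d·e` and `(1 - e)·x = 1 - e`, one gets `e·z = z`, `z·d·e = e` and
`y·d·z = y`. The last identity lets `z` inherit the conditions on the `c`-side from `y`:
`c·d·z = (c·a·y)·d·z = c·a·y = c`.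
-/

section

variable {R : Type*} [Ring R]

theorem IsBCInverse.of_mul_left {a b c d y z w : R} (hy : IsBCInverse a b c y)
    (hz : z = w * y) (hbz : ∃ r, z = b * r * z) (hzdb : z * d * b = b)
    (hydz : y * d * z = y) : IsBCInverse d b c z := by
  obtain ⟨-, ⟨s, hs⟩, -, hcay⟩ := hy
  refine ⟨hbz, ⟨s, ?_⟩, hzdb, ?_⟩
  · rw [hz]
    nth_rewrite 1 [hs]
    simp only [mul_assoc]
  · calc c * d * z = c * a * y * d * z := by rw [hcay]
      _ = c * a * (y * d * z) := by noncomm_ring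
      _ = c := by rw [hydz, hcay]

theorem isIdempotentElem_mul_of_mul_mul_eq {b bm : R} (hbm : b * bm * b = b) :
    IsIdempotentElem (b * bm) := by
  rw [IsIdempotentElem, ← mul_assoc, hbm]

theorem mul_mul_eq_of_eq_mul_mul {b bm r y : R} (hbm : b * bm * b = b) (hy : y = b * r * y) :
    b * bm * y = y := by
  rw [hy, ← mul_assoc, ← mul_assoc, hbm]

namespace IsIdempotentElem

variable {e y d x' : R} (he : IsIdempotentElem e)
include he

theorem add_one_sub_mul_self : (y * d * e + 1 - e) * e = y * d * e := by
  rw [sub_mul, add_mul, one_mul, mul_assoc _ e, he.eq, add_sub_cancel_right]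

theorem mul_add_one_sub (hey : e * y = y) : e * (y * d * e + 1 - e) = y * d * e := by
  rw [mul_sub, mul_add, mul_one, he.eq, ← mul_assoc, ← mul_assoc, hey, add_sub_cancel_right]

theorem one_sub_mul_add_one_sub (hey : e * y = y) :
    (1 - e) * (y * d * e + 1 - e) = 1 - e := by
  rw [sub_mul, one_mul, he.mul_add_one_sub hey]
  abel

theorem mul_inverse_mul (hey : e * y = y) (hx : (y * d * e + 1 - e) * x' = 1) :
    e * (x' * y) = x' * y := by
  have hx'e : (1 - e) * x' = 1 - e := by
    calc (1 - e) * x' = (1 - e) * (y * d * e + 1 - e) * x' := by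
          rw [he.one_sub_mul_add_one_sub hey]
      _ = 1 - e := by rw [mul_assoc, hx, mul_one]
  have h : (1 - e) * (x' * y) = 0 := by rw [← mul_assoc, hx'e, sub_mul, one_mul, hey, sub_self]
  rw [sub_mul, one_mul, sub_eq_zero] at h
  exact h.symm

theorem inverse_mul_mul_mul_self (hx' : x' * (y * d * e + 1 - e) = 1) :
    x' * y * d * e = e := by
  calc x' * y * d * e = x' * ((y * d * e + 1 - e) * e) := by
        rw [he.add_one_sub_mul_self]; noncomm_ring
    _ = e := by rw [← mul_assoc, hx', one_mul]

theorem mul_mul_inverse_mul (hey : e * y = y) (hx : (y * d * e + 1 - e) * x' = 1) :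
    y * d * (x' * y) = y := by
  have hz := he.mul_inverse_mul hey hx
  calc y * d * (x' * y) = (y * d * e + 1 - e) * e * (x' * y) := by
        rw [he.add_one_sub_mul_self, mul_assoc _ e, hz]
    _ = y := by rw [mul_assoc _ e, hz, ← mul_assoc, hx, one_mul]

end IsIdempotentElem

end

/-- with `y = a^{‖(b,c)}`, `e = b·b⁻` and `x = y·d·e + 1 - e` invertible
with inverse `x'`, the element `x'·y = x⁻¹·y` is the (b,c)-inverse of `d`. -/
theorem d_bc_inverse_formula {R : Type*} [Ring R] (a b c d y bm x' : R)
    (hy : IsBCInverse a b c y) (hbm : b * bm * b = b)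
    (hx : (y * d * (b * bm) + 1 - b * bm) * x' = 1)
    (hx' : x' * (y * d * (b * bm) + 1 - b * bm) = 1) :
    IsBCInverse d b c (x' * y) := by
  have he := isIdempotentElem_mul_of_mul_mul_eq hbm
  obtain ⟨r, hr⟩ := hy.1
  have hey : b * bm * y = y := mul_mul_eq_of_eq_mul_mul hbm hr
  refine hy.of_mul_left rfl ⟨bm, (he.mul_inverse_mul hey hx).symm⟩ ?_
    (he.mul_mul_inverse_mul hey hx)
  calc x' * y * d * b = x' * y * d * (b * bm) * b := by rw [mul_assoc _ (b * bm), hbm]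
    _ = b := by rw [he.inverse_mul_mul_mul_self hx', hbm]
end

section
/- Let R be an associative unital ring, let a, b, c, d ∈ R, suppose y is the (b,c)-inverse of a, let c⁻ ∈ R satisfy c·c⁻·c = c, and set f = c⁻·c. Then the following statements are equivalent: (i) d has a (b,c)-inverse; (ii) f ∈ (f·d·y·f)R ∩ R(f·d·y·f); (iii) f·d·y + 1 − f is invertible in R. -/
/-!
Put `f = c⁻c`, an idempotent, and `t = f d y`. Since `y ∈ Rc`, `y f = y`, so `t` lies in the
corner ring `fRf` and condition (ii) says that `t` is invertible there. This is equivalent to the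
invertibility of `t + 1 - f` in `R`. If `w ∈ fRf` inverts `t`, then `y w` is the (b,c)-inverse
of `d`; conversely, from the (b,c)-inverse `z = b r z` of `d` one reads off `f = t (a b r z)` and
`f = (f a z) t`.
-/

section Corner

variable {R : Type*} [Ring R] {f t : R}

theorem exists_corner_inverse_of_exists_mul_eq (hf : IsIdempotentElem f) (hft : f * t = t)
    (htf : t * f = t) (hu : ∃ u, f = t * u) (hv : ∃ v, f = v * t) :
    ∃ w, f * w = w ∧ w * f = w ∧ t * w = f ∧ w * t = f := by
  obtain ⟨u, hu⟩ := hu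
  obtain ⟨v, hv⟩ := hv
  -- `v f = v t u = f u` is both a left and a right inverse
  have hvf : v * f = f * u := by rw [hu, ← mul_assoc, ← hv, ← hu]
  refine ⟨v * f, ?_, ?_, ?_, ?_⟩
  · rw [hvf, ← mul_assoc, hf.eq]
  · rw [mul_assoc, hf.eq]
  · rw [hvf, ← mul_assoc, htf, ← hu]
  · rw [mul_assoc, hft, ← hv]

theorem isUnit_add_one_sub_iff_exists_mul_eq (hf : IsIdempotentElem f) (hft : f * t = t)
    (htf : t * f = t) :
    IsUnit (t + 1 - f) ↔ (∃ u, f = t * u) ∧ ∃ v, f = v * t := by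
  have hf' : f * f = f := hf.eq
  constructor
  · intro hunit
    obtain ⟨h, hh, hh'⟩ := isUnit_iff_exists.mp hunit
    have hleft : f * (t + 1 - f) = t := by
      rw [mul_sub, mul_add, hft, hf', mul_one, add_sub_cancel_right]
    have hright : (t + 1 - f) * f = t := by
      rw [sub_mul, add_mul, htf, hf', one_mul, add_sub_cancel_right]
    refine ⟨⟨h, ?_⟩, ⟨h, ?_⟩⟩
    · rw [← hleft, mul_assoc, hh, mul_one]
    · rw [← hright, ← mul_assoc, hh', one_mul]
  · rintro ⟨hu, hv⟩
    obtain ⟨w, hfw, hwf, htw, hwt⟩ := exists_corner_inverse_of_exists_mul_eq hf hft htf hu hv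
    refine isUnit_iff_exists.mpr ⟨w + 1 - f, ?_, ?_⟩
    · calc (t + 1 - f) * (w + 1 - f) = t * w + t - t * f + w + 1 - f - f * w - f + f * f := by
            noncomm_ring
        _ = 1 := by rw [htw, htf, hfw, hf']; abel
    · calc (w + 1 - f) * (t + 1 - f) = w * t + w - w * f + t + 1 - f - f * t - f + f * f := by
            noncomm_ring
        _ = 1 := by rw [hwt, hwf, hft, hf']; abel

end Corner

section BCInverse

variable {R : Type*} [Ring R] {a b c d y z w cm : R}

theorem IsBCInverse.mul_regular_eq (hy : IsBCInverse a b c y) (hcm : c * cm * c = c) :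
    y * (cm * c) = y := by
  obtain ⟨-, ⟨s, hs⟩, -, -⟩ := hy
  rw [hs, mul_assoc, ← mul_assoc c, hcm]

theorem IsBCInverse.mul_mul_eq_of_isBCInverse_s10 (hz : IsBCInverse d b c z)
    (hy : IsBCInverse a b c y) :
    z * d * y = y := by
  obtain ⟨⟨r, hr⟩, -, -, -⟩ := hy
  obtain ⟨-, -, hzdb, -⟩ := hz
  rw [hr, ← mul_assoc, ← mul_assoc, hzdb]

theorem IsBCInverse.exists_mul_eq (hy : IsBCInverse a b c y) (hz : IsBCInverse d b c z)
    (hcm : c * cm * c = c) :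
    (∃ u, cm * c = cm * c * d * y * u) ∧ ∃ v, cm * c = v * (cm * c * d * y) := by
  obtain ⟨-, -, hyab, hcay⟩ := id hy
  obtain ⟨⟨r, hr⟩, -, -, hcdz⟩ := id hz
  refine ⟨⟨a * b * r * z, ?_⟩, ⟨cm * c * a * z, ?_⟩⟩
  · calc cm * c = cm * (c * d * (b * r * z)) := by rw [← hr, hcdz]
      _ = cm * c * d * (y * a * b) * r * z := by rw [hyab]; simp only [mul_assoc]
      _ = cm * c * d * y * (a * b * r * z) := by simp only [mul_assoc]
  · calc cm * c = cm * (c * a * (z * d * y)) := by rw [hz.mul_mul_eq_of_isBCInverse_s10 hy, hcay]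
      _ = cm * c * a * (z * (cm * c) * d * y) := by
        rw [hz.mul_regular_eq hcm]; simp only [mul_assoc]
      _ = cm * c * a * z * (cm * c * d * y) := by simp only [mul_assoc]

theorem isBCInverse_mul_of_corner_inverse (hy : IsBCInverse a b c y) (hcm : c * cm * c = c)
    (hwf : w * (cm * c) = w) (htw : cm * c * d * y * w = cm * c)
    (hwt : w * (cm * c * d * y) = cm * c) :
    IsBCInverse d b c (y * w) := by
  obtain ⟨⟨r, hr⟩, -, hyab, -⟩ := id hy
  have hwdy : w * d * y = cm * c := by
    calc w * d * y = w * (cm * c) * d * y := by rw [hwf]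
      _ = w * (cm * c * d * y) := by simp only [mul_assoc]
      _ = cm * c := hwt
  refine ⟨⟨r, ?_⟩, ⟨cm, ?_⟩, ?_, ?_⟩
  · rw [← mul_assoc, ← hr]
  · rw [mul_assoc, mul_assoc, hwf]
  · calc y * w * d * b = y * w * d * (y * a * b) := by rw [hyab]
      _ = y * (w * d * y) * a * b := by simp only [mul_assoc]
      _ = b := by rw [hwdy, hy.mul_regular_eq hcm, hyab]
  · calc c * d * (y * w) = c * cm * c * d * y * w := by rw [hcm]; simp only [mul_assoc]
      _ = c * (cm * c * d * y * w) := by simp only [mul_assoc]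
      _ = c := by rw [htw, ← mul_assoc, hcm]

end BCInverse

/-- with `y = a^{‖(b,c)}` and `f = c⁻·c`, `d` has a (b,c)-inverse iff
`f ∈ (f·d·y·f)R ∩ R(f·d·y·f)` iff `f·d·y + 1 - f` is invertible. -/
theorem d_bc_inverse_tfae' {R : Type*} [Ring R] (a b c d y cm : R)
    (hy : IsBCInverse a b c y) (hcm : c * cm * c = c) :
    List.TFAE
      [ (∃ z, IsBCInverse d b c z),
        (∃ u, cm * c = (cm * c) * d * y * (cm * c) * u) ∧
          (∃ u, cm * c = u * ((cm * c) * d * y * (cm * c))),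
        IsUnit ((cm * c) * d * y + 1 - cm * c) ] := by
  have hf : IsIdempotentElem (cm * c) := by
    rw [IsIdempotentElem, mul_assoc, ← mul_assoc c, hcm]
  have hft : cm * c * (cm * c * d * y) = cm * c * d * y := by
    rw [← mul_assoc, ← mul_assoc, hf.eq]
  have htf : cm * c * d * y * (cm * c) = cm * c * d * y := by
    rw [mul_assoc _ y, hy.mul_regular_eq hcm]
  rw [htf]
  tfae_have 1 → 2 := fun ⟨z, hz⟩ ↦ hy.exists_mul_eq hz hcm
  tfae_have 2 → 1 := fun ⟨hu, hv⟩ ↦ by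
    obtain ⟨w, -, hwf, htw, hwt⟩ := exists_corner_inverse_of_exists_mul_eq hf hft htf hu hv
    exact ⟨y * w, isBCInverse_mul_of_corner_inverse hy hcm hwf htw hwt⟩
  tfae_have 2 ↔ 3 := (isUnit_add_one_sub_iff_exists_mul_eq hf hft htf).symm
  tfae_finish
end

section
/- Let R be an associative unital ring, let a, b, c, d ∈ R, suppose y is the (b,c)-inverse of a, let c⁻ ∈ R satisfy c·c⁻·c = c, and set f = c⁻·c. If x = f·d·y + 1 − f is invertible in R, then y·x⁻¹ is the (b,c)-inverse of d. -/
section Ring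

variable {R : Type*} [Ring R]

theorem isIdempotentElem_mul_of_mul_mul_eq_self {c cm : R} (hcm : c * cm * c = c) :
    IsIdempotentElem (cm * c) := by
  rw [IsIdempotentElem, mul_assoc, ← mul_assoc c, hcm]

theorem IsIdempotentElem.mul_mul_mul_add_one_sub {f : R} (hf : IsIdempotentElem f) (d y : R) :
    f * (f * d * y + 1 - f) = f * d * y := by
  rw [mul_sub, mul_add, mul_one, ← mul_assoc, ← mul_assoc, hf.eq, add_sub_cancel_right]

theorem IsIdempotentElem.mul_add_one_sub_mul {f y : R} (hf : IsIdempotentElem f) (d : R)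
    (hyf : y * f = y) : (f * d * y + 1 - f) * f = f * d * y := by
  rw [sub_mul, add_mul, one_mul, mul_assoc (f * d), hyf, hf.eq, add_sub_cancel_right]

theorem IsBCInverse.mul_eq_self {a b c y e : R} (hy : IsBCInverse a b c y) (he : c * e = c) :
    y * e = y := by
  obtain ⟨-, ⟨s, hs⟩, -⟩ := hy
  conv_lhs => rw [hs]
  rw [mul_assoc _ c, he, ← hs]

theorem IsBCInverse.mul_units_inv {a b c d y cm : R} (hy : IsBCInverse a b c y)
    (hcm : c * cm * c = c) (u : Rˣ) (hfu : cm * c * u = cm * c * d * y)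
    (hcomm : Commute (cm * c) u) : IsBCInverse d b c (y * ↑u⁻¹) := by
  have hcf : c * (cm * c) = c := by rw [← mul_assoc, hcm]
  have hyf : y * (cm * c) = y := hy.mul_eq_self hcf
  have hyuf : y * ↑u⁻¹ * (cm * c) = y * ↑u⁻¹ := by
    rw [mul_assoc, ← hcomm.units_inv_right.eq, ← mul_assoc, hyf]
  obtain ⟨⟨r, hr⟩, -, hyab, -⟩ := hy
  refine ⟨⟨r, by rw [← mul_assoc, ← hr]⟩, ⟨cm, by rw [mul_assoc _ cm, hyuf]⟩, ?_, ?_⟩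
  · calc y * ↑u⁻¹ * d * b = y * ↑u⁻¹ * (cm * c) * d * (y * a * b) := by rw [hyuf, hyab]
      _ = y * ↑u⁻¹ * (cm * c * d * y) * (a * b) := by simp only [mul_assoc]
      _ = y * ↑u⁻¹ * (↑u * (cm * c)) * (a * b) := by rw [← hfu, hcomm.eq]
      _ = y * (cm * c) * (a * b) := by simp only [mul_assoc, Units.inv_mul_cancel_left]
      _ = b := by rw [hyf, ← mul_assoc, hyab]
  · calc c * d * (y * ↑u⁻¹) = c * (cm * c * d * y) * ↑u⁻¹ := by simp only [← mul_assoc, hcm]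
      _ = c * (cm * c) * ↑u * ↑u⁻¹ := by rw [← hfu, ← mul_assoc]
      _ = c := by rw [hcf, Units.mul_inv_cancel_right]

end Ring

/-- with `y = a^{‖(b,c)}`, `f = c⁻·c` and `x = f·d·y + 1 - f` invertible
with inverse `x'`, the element `y·x' = y·x⁻¹` is the (b,c)-inverse of `d`. -/
theorem d_bc_inverse_formula' {R : Type*} [Ring R] (a b c d y cm x' : R)
    (hy : IsBCInverse a b c y) (hcm : c * cm * c = c)
    (hx : ((cm * c) * d * y + 1 - cm * c) * x' = 1)
    (hx' : x' * ((cm * c) * d * y + 1 - cm * c) = 1) :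
    IsBCInverse d b c (y * x') := by
  have hf : IsIdempotentElem (cm * c) := isIdempotentElem_mul_of_mul_mul_eq_self hcm
  have hyf : y * (cm * c) = y := hy.mul_eq_self (by rw [← mul_assoc, hcm])
  have hfx := hf.mul_mul_mul_add_one_sub d y
  have hxf := hf.mul_add_one_sub_mul d hyf
  exact hy.mul_units_inv hcm ⟨_, x', hx, hx'⟩ hfx (hfx.trans hxf.symm)
end

section
/- Let R be an associative unital ring, let p, q ∈ R be idempotents, and suppose a ∈ R has an image-kernel (p,q)-inverse x. Then for d ∈ R the following statements are equivalent: (i) d has an image-kernel (p,q)-inverse; (ii) 1 − p + x·d·p is invertible in R; (iii) q + (1 − q)·d·x is invertible in R. -/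
/-!
Write `u = 1 - p + x d p` and `v = q + (1 - q) d x`. Relative to the given inverse `x` of `a`, an
element `w` is an image-kernel `(p,q)`-inverse of `d` exactly when `p w = w`, `w q = 0`,
`x d w = x` and `w d x = x`. If `w` exists, `w a p` inverts `x d p` in the corner `pRp` and
`(1 - q) a w` inverts `(1 - q) d x` in the corner `(1 - q)R(1 - q)`, which makes `u` and `v` units.
Conversely `u` commutes with `p` and `v` with `q`, and the inverses `w = u⁻¹ x` and `w = x v⁻¹`
satisfy the four relations.
-/

def IsImageKernelInverse {R : Type*} [Ring R] (p q a x : R) : Prop :=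
  x * a * x = x ∧ ({t : R | ∃ u, t = x * a * u} = {t : R | ∃ u, t = p * u}) ∧
    ({t : R | ∃ u, t = (1 - a * x) * u} = {t : R | ∃ u, t = q * u})

section

variable {R : Type*} [Ring R]

theorem IsIdempotentElem.setOf_eq_mul_eq_iff {e f : R} (he : IsIdempotentElem e)
    (hf : IsIdempotentElem f) :
    {t : R | ∃ u, t = e * u} = {t : R | ∃ u, t = f * u} ↔ f * e = e ∧ e * f = f := by
  constructor
  · intro h
    obtain ⟨u, hu⟩ : e ∈ {t : R | ∃ u, t = f * u} := h ▸ ⟨1, (mul_one e).symm⟩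
    obtain ⟨v, hv⟩ : f ∈ {t : R | ∃ u, t = e * u} := h ▸ ⟨1, (mul_one f).symm⟩
    exact ⟨by rw [hu, ← mul_assoc, hf.eq], by rw [hv, ← mul_assoc, he.eq]⟩
  · rintro ⟨hfe, hef⟩
    ext t
    constructor
    · rintro ⟨u, rfl⟩
      exact ⟨e * u, by rw [← mul_assoc, hfe]⟩
    · rintro ⟨u, rfl⟩
      exact ⟨f * u, by rw [← mul_assoc, hef]⟩

theorem IsIdempotentElem.isUnit_one_sub_add {e s t : R} (he : IsIdempotentElem e)
    (hse : s * e = s) (hes : e * s = s) (hte : t * e = t) (het : e * t = t)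
    (hst : s * t = e) (hts : t * s = e) : IsUnit (1 - e + s) :=
  isUnit_iff_exists.2 ⟨1 - e + t,
    by linear_combination (norm := noncomm_ring) he.eq - het - hse + hst,
    by linear_combination (norm := noncomm_ring) he.eq - hes - hte + hts⟩

variable {p q a d x w : R}

theorem isImageKernelInverse_iff_mul_eq (hp : IsIdempotentElem p) (hq : IsIdempotentElem q) :
    IsImageKernelInverse p q a x ↔
      x * a * p = p ∧ p * x = x ∧ x * q = 0 ∧ (1 - q) * a * x = 1 - q := by
  have hxa (hxax : x * a * x = x) : IsIdempotentElem (x * a) := by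
    rw [IsIdempotentElem, ← mul_assoc, hxax]
  have hax (hxax : x * a * x = x) : IsIdempotentElem (1 - a * x) :=
    IsIdempotentElem.one_sub <| by rw [IsIdempotentElem, mul_assoc, ← mul_assoc x, hxax]
  constructor
  · rintro ⟨hxax, himage, hkernel⟩
    obtain ⟨hpxa, hxap⟩ := ((hxa hxax).setOf_eq_mul_eq_iff hp).1 himage
    obtain ⟨hqax, haxq⟩ := ((hax hxax).setOf_eq_mul_eq_iff hq).1 hkernel
    refine ⟨hxap, ?_, ?_, ?_⟩
    · linear_combination (norm := noncomm_ring) hpxa * x - p * hxax + hxax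
    · linear_combination (norm := noncomm_ring) -x * haxq - hxax * q
    · linear_combination (norm := noncomm_ring) hqax
  · rintro ⟨hxap, hpx, hxq, hqax⟩
    have hxax : x * a * x = x := by
      linear_combination (norm := noncomm_ring) -(x * a) * hpx + hxap * x + hpx
    refine ⟨hxax, ((hxa hxax).setOf_eq_mul_eq_iff hp).2 ⟨?_, hxap⟩,
      ((hax hxax).setOf_eq_mul_eq_iff hq).2 ⟨?_, ?_⟩⟩
    · linear_combination (norm := noncomm_ring) hpx * a
    · linear_combination (norm := noncomm_ring) hqax
    · linear_combination (norm := noncomm_ring) -a * hxq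

theorem IsImageKernelInverse.isImageKernelInverse_iff (hp : IsIdempotentElem p)
    (hq : IsIdempotentElem q) (hx : IsImageKernelInverse p q a x) :
    IsImageKernelInverse p q d w ↔ p * w = w ∧ w * q = 0 ∧ x * d * w = x ∧ w * d * x = x := by
  obtain ⟨hxap, hpx, hxq, hqax⟩ := (isImageKernelInverse_iff_mul_eq hp hq).1 hx
  rw [isImageKernelInverse_iff_mul_eq hp hq]
  constructor
  · rintro ⟨hwdp, hpw, hwq, hqdw⟩
    refine ⟨hpw, hwq, ?_, ?_⟩
    · linear_combination (norm := noncomm_ring) x * hqdw + hxq * (d * w) - hxq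
    · linear_combination (norm := noncomm_ring) hwdp * x - (w * d) * hpx + hpx
  · rintro ⟨hpw, hwq, hxdw, hwdx⟩
    refine ⟨?_, hpw, hwq, ?_⟩
    · linear_combination (norm := noncomm_ring) hwdx * (a * p) + hxap - (w * d) * hxap
    · linear_combination (norm := noncomm_ring) ((1 - q) * a) * hxdw + hqax - hqax * (d * w)

theorem IsImageKernelInverse.isUnit_one_sub_add_mul_mul (hp : IsIdempotentElem p)
    (hq : IsIdempotentElem q) (hx : IsImageKernelInverse p q a x)
    (hw : IsImageKernelInverse p q d w) : IsUnit (1 - p + x * d * p) := by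
  obtain ⟨hpw, -, hxdw, -⟩ := (hx.isImageKernelInverse_iff hp hq).1 hw
  obtain ⟨hpx, -, hwax, -⟩ := (hw.isImageKernelInverse_iff hp hq).1 hx
  obtain ⟨hxap, -⟩ := (isImageKernelInverse_iff_mul_eq hp hq).1 hx
  obtain ⟨hwdp, -⟩ := (isImageKernelInverse_iff_mul_eq hp hq).1 hw
  refine hp.isUnit_one_sub_add (t := w * a * p) ?_ ?_ ?_ ?_ ?_ ?_
  · rw [mul_assoc, hp.eq]
  · rw [← mul_assoc, ← mul_assoc, hpx]
  · rw [mul_assoc, hp.eq]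
  · rw [← mul_assoc, ← mul_assoc, hpw]
  · calc x * d * p * (w * a * p) = x * d * (p * w) * a * p := by simp only [mul_assoc]
      _ = p := by rw [hpw, hxdw, hxap]
  · calc w * a * p * (x * d * p) = w * a * (p * x) * d * p := by simp only [mul_assoc]
      _ = p := by rw [hpx, hwax, hwdp]

theorem IsImageKernelInverse.isUnit_add_one_sub_mul_mul (hp : IsIdempotentElem p)
    (hq : IsIdempotentElem q) (hx : IsImageKernelInverse p q a x)
    (hw : IsImageKernelInverse p q d w) : IsUnit (q + (1 - q) * d * x) := by
  obtain ⟨-, hwq, -, hwdx⟩ := (hx.isImageKernelInverse_iff hp hq).1 hw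
  obtain ⟨-, hxq, -, hxaw⟩ := (hw.isImageKernelInverse_iff hp hq).1 hx
  obtain ⟨-, -, -, hqax⟩ := (isImageKernelInverse_iff_mul_eq hp hq).1 hx
  obtain ⟨-, -, -, hqdw⟩ := (isImageKernelInverse_iff_mul_eq hp hq).1 hw
  have h := hq.one_sub.isUnit_one_sub_add (s := (1 - q) * d * x) (t := (1 - q) * a * w)
  rw [sub_sub_cancel] at h
  refine h ?_ ?_ ?_ ?_ ?_ ?_
  · linear_combination (norm := noncomm_ring) -((1 - q) * d) * hxq
  · linear_combination (norm := noncomm_ring) hq.eq * (d * x)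
  · linear_combination (norm := noncomm_ring) -((1 - q) * a) * hwq
  · linear_combination (norm := noncomm_ring) hq.eq * (a * w)
  · calc (1 - q) * d * x * ((1 - q) * a * w) = (1 - q) * d * (x * (1 - q) * a * w) := by
          simp only [mul_assoc]
      _ = 1 - q := by rw [mul_one_sub, hxq, sub_zero, hxaw, hqdw]
  · calc (1 - q) * a * w * ((1 - q) * d * x) = (1 - q) * a * (w * (1 - q) * d * x) := by
          simp only [mul_assoc]
      _ = 1 - q := by rw [mul_one_sub, hwq, sub_zero, hwdx, hqax]

theorem IsImageKernelInverse.of_units_eq_one_sub_add_mul_mul (hp : IsIdempotentElem p)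
    (hq : IsIdempotentElem q) (hx : IsImageKernelInverse p q a x) (u : Rˣ)
    (hu : (u : R) = 1 - p + x * d * p) : IsImageKernelInverse p q d (↑u⁻¹ * x) := by
  obtain ⟨-, hpx, hxq, -⟩ := (isImageKernelInverse_iff_mul_eq hp hq).1 hx
  have hmul {y : R} (hy : p * y = y) : u * y = x * d * y := by
    rw [hu]; linear_combination (norm := noncomm_ring) (x * d - 1) * hy
  have hpu : Commute p u := by
    rw [Commute, SemiconjBy, hu]
    linear_combination (norm := noncomm_ring) hpx * (d * p) - (x * d) * hp.eq
  have hpw : p * (↑u⁻¹ * x) = ↑u⁻¹ * x := by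
    rw [← mul_assoc, hpu.units_inv_right.eq, mul_assoc, hpx]
  rw [hx.isImageKernelInverse_iff hp hq]
  refine ⟨hpw, by rw [mul_assoc, hxq, mul_zero], ?_, ?_⟩
  · rw [← hmul hpw, ← mul_assoc, Units.mul_inv, one_mul]
  · rw [mul_assoc, mul_assoc, ← mul_assoc x, ← hmul hpx, ← mul_assoc, Units.inv_mul, one_mul]

theorem IsImageKernelInverse.of_units_eq_add_one_sub_mul_mul (hp : IsIdempotentElem p)
    (hq : IsIdempotentElem q) (hx : IsImageKernelInverse p q a x) (v : Rˣ)
    (hv : (v : R) = q + (1 - q) * d * x) : IsImageKernelInverse p q d (x * ↑v⁻¹) := by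
  obtain ⟨-, hpx, hxq, -⟩ := (isImageKernelInverse_iff_mul_eq hp hq).1 hx
  have hmul {y : R} (hy : y * q = 0) : y * v = y * d * x := by
    rw [hv]; linear_combination (norm := noncomm_ring) hy - hy * (d * x)
  have hqv : Commute q v := by
    rw [Commute, SemiconjBy, hv]
    linear_combination (norm := noncomm_ring) -hq.eq * (d * x) - ((1 - q) * d) * hxq
  have hwq : x * ↑v⁻¹ * q = 0 := by
    rw [mul_assoc, ← hqv.units_inv_right.eq, ← mul_assoc, hxq, zero_mul]
  rw [hx.isImageKernelInverse_iff hp hq]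
  refine ⟨by rw [← mul_assoc, hpx], hwq, ?_, ?_⟩
  · rw [← mul_assoc, ← hmul hxq, mul_assoc, Units.mul_inv, mul_one]
  · rw [← hmul hwq, mul_assoc, Units.inv_mul, mul_one]

end

/-- for idempotents `p, q` and `x` an image-kernel (p,q)-inverse of `a`,
`d` has an image-kernel (p,q)-inverse iff `1 - p + x·d·p` is invertible iff
`q + (1 - q)·d·x` is invertible. -/
theorem image_kernel_inverse_tfae {R : Type*} [Ring R] (p q a x d : R)
    (hp : p * p = p) (hq : q * q = q) (hx : IsImageKernelInverse p q a x) :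
    List.TFAE
      [ (∃ w, IsImageKernelInverse p q d w),
        IsUnit (1 - p + x * d * p),
        IsUnit (q + (1 - q) * d * x) ] := by
  tfae_have 1 → 2 := fun ⟨_, hw⟩ => hx.isUnit_one_sub_add_mul_mul hp hq hw
  tfae_have 1 → 3 := fun ⟨_, hw⟩ => hx.isUnit_add_one_sub_mul_mul hp hq hw
  tfae_have 2 → 1 := fun ⟨u, hu⟩ => ⟨_, hx.of_units_eq_one_sub_add_mul_mul hp hq u hu⟩
  tfae_have 3 → 1 := fun ⟨v, hv⟩ => ⟨_, hx.of_units_eq_add_one_sub_mul_mul hp hq v hv⟩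
  tfae_finish
end

section
/- Let R be an associative unital ring, let a, b, c, d ∈ R, and suppose y is the (b,c)-inverse of a and z is the (b,c)-inverse of d. Then z = z·a·y = y·a·z and y = y·d·z = z·d·y. -/
namespace IsBCInverse

variable {R : Type*} [Ring R] {a b c d y z : R}

theorem eq_self_mul_mul (hz : IsBCInverse d b c z) (hy : IsBCInverse a b c y) :
    z = z * a * y := by
  obtain ⟨s, hs⟩ := hz.2.1
  calc z = z * s * c := hs
    _ = z * s * (c * a * y) := by rw [hy.2.2.2]
    _ = z * s * c * a * y := by simp only [mul_assoc]
    _ = z * a * y := by rw [← hs]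

theorem eq_mul_mul_self (hz : IsBCInverse d b c z) (hy : IsBCInverse a b c y) :
    z = y * a * z := by
  obtain ⟨r, hr⟩ := hz.1
  calc z = b * r * z := hr
    _ = y * a * b * r * z := by rw [hy.2.2.1]
    _ = y * a * (b * r * z) := by simp only [mul_assoc]
    _ = y * a * z := by rw [← hr]

end IsBCInverse

/-- if `y = a^{‖(b,c)}` and `z = d^{‖(b,c)}`, then
`z = z·a·y = y·a·z` and `y = y·d·z = z·d·y`. -/
theorem bc_inverse_absorption {R : Type*} [Ring R] (a b c d y z : R)
    (hy : IsBCInverse a b c y) (hz : IsBCInverse d b c z) :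
    z = z * a * y ∧ z = y * a * z ∧ y = y * d * z ∧ y = z * d * y :=
  ⟨hz.eq_self_mul_mul hy, hz.eq_mul_mul_self hy, hy.eq_self_mul_mul hz, hy.eq_mul_mul_self hz⟩
end

section
/- Let R be an associative unital ring, let a, b, c, d ∈ R, suppose y is the (b,c)-inverse of a and z is the (b,c)-inverse of d, let b⁻, c⁻ ∈ R satisfy b·b⁻·b = b and c·c⁻·c = c, and set e = b·b⁻ and f = c⁻·c. Then e = e·z·a·y·d·e = e·y·a·e = e·z·d·e and f = f·d·y·a·z·f = f·d·z·f = f·a·y·f. -/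
section InnerInverse

variable {R : Type*} [Monoid R] {b c bm cm p : R}

theorem mul_inner_eq_sandwich_of_mul_eq (hbm : b * bm * b = b) (hp : p * b = b) :
    b * bm = b * bm * p * (b * bm) := by
  rw [mul_assoc (b * bm) p, ← mul_assoc p, hp, ← mul_assoc, hbm]

theorem inner_mul_eq_sandwich_of_mul_eq (hcm : c * cm * c = c) (hp : c * p = c) :
    cm * c = cm * c * p * (cm * c) := by
  rw [mul_assoc cm c p, hp, mul_assoc, ← mul_assoc c, hcm]

end InnerInverse

namespace IsBCInverse

variable {R : Type*} [Ring R] {a b c y z : R}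

theorem mul_mul_eq_self_of_eq_mul_right (hy : IsBCInverse a b c y) {s : R}
    (hz : z = z * s * c) : z * a * y = z :=
  calc z * a * y = z * s * (c * a * y) := by nth_rw 1 [hz]; simp only [mul_assoc]
    _ = z := by rw [hy.2.2.2, ← hz]

theorem mul_mul_eq_self_of_eq_left_mul (hy : IsBCInverse a b c y) {r : R}
    (hz : z = b * r * z) : y * a * z = z :=
  calc y * a * z = y * a * b * (r * z) := by nth_rw 1 [hz]; simp only [mul_assoc]
    _ = z := by rw [hy.2.2.1, ← mul_assoc, ← hz]

end IsBCInverse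

/-- if `y = a^{‖(b,c)}`, `z = d^{‖(b,c)}`, `e = b·b⁻`, `f = c⁻·c`, then
`e = e·z·a·y·d·e = e·y·a·e = e·z·d·e` and `f = f·d·y·a·z·f = f·d·z·f = f·a·y·f`. -/
theorem bc_idempotent_identities {R : Type*} [Ring R] (a b c d y z bm cm : R)
    (hy : IsBCInverse a b c y) (hz : IsBCInverse d b c z)
    (hbm : b * bm * b = b) (hcm : c * cm * c = c) :
    (b * bm = (b * bm) * z * a * y * d * (b * bm) ∧
     b * bm = (b * bm) * y * a * (b * bm) ∧
     b * bm = (b * bm) * z * d * (b * bm)) ∧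
    (cm * c = (cm * c) * d * y * a * z * (cm * c) ∧
     cm * c = (cm * c) * d * z * (cm * c) ∧
     cm * c = (cm * c) * a * y * (cm * c)) := by
  obtain ⟨⟨r, hr⟩, ⟨s, hs⟩, hzdb, hcdz⟩ := hz
  have hzay : z * a * y = z := hy.mul_mul_eq_self_of_eq_mul_right hs
  have hyaz : y * a * z = z := hy.mul_mul_eq_self_of_eq_left_mul hr
  obtain ⟨-, -, hyab, hcay⟩ := hy
  refine ⟨⟨?_, ?_, ?_⟩, ?_, ?_, ?_⟩
  · simpa only [mul_assoc] using
      mul_inner_eq_sandwich_of_mul_eq hbm (p := z * a * y * d) (by rw [hzay, hzdb])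
  · simpa only [mul_assoc] using mul_inner_eq_sandwich_of_mul_eq hbm (p := y * a) hyab
  · simpa only [mul_assoc] using mul_inner_eq_sandwich_of_mul_eq hbm (p := z * d) hzdb
  · simpa only [mul_assoc] using
      inner_mul_eq_sandwich_of_mul_eq hcm (p := d * y * a * z)
        (by rw [mul_assoc d, mul_assoc d, hyaz, ← mul_assoc, hcdz])
  · simpa only [mul_assoc] using
      inner_mul_eq_sandwich_of_mul_eq hcm (p := d * z) (by rw [← mul_assoc, hcdz])
  · simpa only [mul_assoc] using
      inner_mul_eq_sandwich_of_mul_eq hcm (p := a * y) (by rw [← mul_assoc, hcay])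
end

section
/- Let R be an associative unital ring, let a, b, c, d ∈ R, and suppose y is the (b,c)-inverse of a and z is the (b,c)-inverse of d. Then the following statements are equivalent: (i) a·y = d·z; (ii) a·y·d·z = d·z·a·y; (iii) a·z·d·y = d·y·a·z; (iv) a·z is group invertible with group inverse d·y; (v) d·y is group invertible with group inverse a·z. -/
/-- `x` is the group inverse of `w`. -/
def IsGroupInverse {R : Type*} [Ring R] (w x : R) : Prop :=
  w * x * w = w ∧ x * w * x = x ∧ w * x = x * w

section GroupInverse

variable {R : Type*} [Ring R] {w x : R}

theorem IsGroupInverse.symm (h : IsGroupInverse w x) : IsGroupInverse x w :=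
  ⟨h.2.1, h.1, h.2.2.symm⟩

theorem isGroupInverse_comm : IsGroupInverse w x ↔ IsGroupInverse x w :=
  ⟨IsGroupInverse.symm, IsGroupInverse.symm⟩

theorem isGroupInverse_iff_mul_comm (hw : w * x * w = w) (hx : x * w * x = x) :
    IsGroupInverse w x ↔ w * x = x * w :=
  ⟨fun h => h.2.2, fun h => ⟨hw, hx, h⟩⟩

theorem tfae_eq_of_factorization {p q u v : R} (hpq : p * q = p) (hqp : q * p = q)
    (huv : u * v = p) (hvu : v * u = q) (hpu : p * u = u) (hqv : q * v = v) :
    List.TFAE [p = q, p * q = q * p, u * v = v * u, IsGroupInverse u v, IsGroupInverse v u] := by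
  tfae_have 2 ↔ 1 := by rw [hpq, hqp]
  tfae_have 3 ↔ 1 := by rw [huv, hvu]
  tfae_have 4 ↔ 3 := isGroupInverse_iff_mul_comm (by rw [huv, hpu]) (by rw [hvu, hqv])
  tfae_have 5 ↔ 4 := isGroupInverse_comm
  tfae_finish

end GroupInverse

section BCInverse

variable {R : Type*} [Ring R] {a b c d y z : R}

theorem IsBCInverse.mul_mul_eq_right (hy : IsBCInverse a b c y) (hz : IsBCInverse d b c z) :
    y * a * z = z := by
  obtain ⟨-, -, hyab, -⟩ := hy
  obtain ⟨⟨r, hr⟩, -⟩ := hz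
  conv_lhs => rw [hr]
  rw [← mul_assoc, ← mul_assoc, hyab, ← hr]

theorem IsBCInverse.mul_mul_eq_left (hy : IsBCInverse a b c y) (hz : IsBCInverse d b c z) :
    y * d * z = y := by
  obtain ⟨-, ⟨s, hs⟩, -⟩ := hy
  obtain ⟨-, -, -, hcdz⟩ := hz
  conv_lhs => rw [hs]
  rw [mul_assoc (y * s * c), mul_assoc (y * s), ← mul_assoc c, hcdz, ← hs]

end BCInverse

/-- characterizations of `a·y = d·z` for the (b,c)-inverses `y` of `a`
and `z` of `d`. -/
theorem equal_right_bc_idempotents_tfae {R : Type*} [Ring R] (a b c d y z : R)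
    (hy : IsBCInverse a b c y) (hz : IsBCInverse d b c z) :
    List.TFAE
      [ a * y = d * z,
        a * y * d * z = d * z * a * y,
        a * z * d * y = d * y * a * z,
        IsGroupInverse (a * z) (d * y),
        IsGroupInverse (d * y) (a * z) ] := by
  have hyaz := hy.mul_mul_eq_right hz
  have hzdy := hz.mul_mul_eq_right hy
  have hydz := hy.mul_mul_eq_left hz
  have hzay := hz.mul_mul_eq_left hy
  simpa only [mul_assoc] using tfae_eq_of_factorization
    (by rw [mul_assoc, ← mul_assoc y, hydz] : a * y * (d * z) = a * y)
    (by rw [mul_assoc, ← mul_assoc z, hzay] : d * z * (a * y) = d * z)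
    (by rw [mul_assoc, ← mul_assoc z, hzdy] : a * z * (d * y) = a * y)
    (by rw [mul_assoc, ← mul_assoc y, hyaz] : d * y * (a * z) = d * z)
    (by rw [mul_assoc, ← mul_assoc y, hyaz] : a * y * (a * z) = a * z)
    (by rw [mul_assoc, ← mul_assoc z, hzdy] : d * z * (d * y) = d * y)
end

section
/- Let R be an associative unital ring, let a, b, c, d ∈ R, and suppose y is the (b,c)-inverse of a and z is the (b,c)-inverse of d. Then the following statements are equivalent: (i) z·y is the (b,c)-inverse of a·d; (ii) z = z·a·d·z·y = z·y·a·d·z; (iii) y = y·a·d·z·y = z·y·a·d·y. -/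
section Semigroup

variable {M : Type*} [Semigroup M]

theorem mul_eq_self_of_mul_mul_eq_self_right {y s c w : M} (hy : y * s * c = y)
    (hc : c * w = c) : y * w = y := by
  rw [← hy, mul_assoc _ c, hc]

theorem mul_eq_self_of_mul_mul_eq_self_left {y r b w : M} (hy : b * r * y = y)
    (hb : w * b = b) : w * y = y := by
  rw [← hy, ← mul_assoc, ← mul_assoc, hb]

end Semigroup

section Ring

variable {R : Type*} [Ring R] {a b c d y z : R}

theorem IsBCInverse.eq_mul_mul_of_isBCInverse_mul (hz : IsBCInverse d b c z)
    (h : IsBCInverse (a * d) b c (z * y)) :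
    z = z * a * d * z * y ∧ z = z * y * a * d * z := by
  obtain ⟨⟨r, hr⟩, ⟨s, hs⟩, -, -⟩ := hz
  have hb : z * y * a * d * b = b := by simpa only [mul_assoc] using h.2.2.1
  have hc : c * (a * d * z * y) = c := by simpa only [mul_assoc] using h.2.2.2
  constructor
  · simpa only [mul_assoc] using (mul_eq_self_of_mul_mul_eq_self_right hs.symm hc).symm
  · simpa only [mul_assoc] using (mul_eq_self_of_mul_mul_eq_self_left hr.symm hb).symm

theorem IsBCInverse.eq_mul_mul_of_eq_mul_mul (hy : IsBCInverse a b c y)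
    (hz : IsBCInverse d b c z) (h : z = z * a * d * z * y ∧ z = z * y * a * d * z) :
    y = y * a * d * z * y ∧ y = z * y * a * d * y := by
  obtain ⟨⟨r, hr⟩, ⟨s, hs⟩, -, -⟩ := hy
  have hb : z * y * a * d * b = b :=
    mul_eq_self_of_mul_mul_eq_self_left hz.2.2.1 h.2.symm
  have hc : c * (a * d * z * y) = c :=
    mul_eq_self_of_mul_mul_eq_self_right hz.2.2.2 (by simpa only [mul_assoc] using h.1.symm)
  constructor
  · simpa only [mul_assoc] using (mul_eq_self_of_mul_mul_eq_self_right hs.symm hc).symm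
  · simpa only [mul_assoc] using (mul_eq_self_of_mul_mul_eq_self_left hr.symm hb).symm

theorem IsBCInverse.isBCInverse_mul_of_eq_mul_mul (hy : IsBCInverse a b c y)
    (hz : IsBCInverse d b c z) (h : y = y * a * d * z * y ∧ y = z * y * a * d * y) :
    IsBCInverse (a * d) b c (z * y) := by
  obtain ⟨-, ⟨s, hs⟩, hyab, hcay⟩ := hy
  obtain ⟨⟨r, hr⟩, -, -, -⟩ := hz
  refine ⟨⟨r, by rw [← mul_assoc, ← hr]⟩, ⟨s, by rw [mul_assoc z, mul_assoc z, ← hs]⟩, ?_, ?_⟩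
  · calc z * y * (a * d) * b = z * y * a * d * (y * a * b) := by rw [hyab, ← mul_assoc]
      _ = z * y * a * d * y * a * b := by simp only [mul_assoc]
      _ = b := by rw [← h.2, hyab]
  · calc c * (a * d) * (z * y) = c * a * y * a * d * z * y := by
          rw [hcay]; simp only [mul_assoc]
      _ = c * a * (y * a * d * z * y) := by simp only [mul_assoc]
      _ = c := by rw [← h.1, hcay]

end Ring

/-- the reverse order rule `(a·d)^{‖(b,c)} = z·y` holds iff
`z = z·a·d·z·y = z·y·a·d·z` iff `y = y·a·d·z·y = z·y·a·d·y`. -/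
theorem reverse_order_rule_tfae {R : Type*} [Ring R] (a b c d y z : R)
    (hy : IsBCInverse a b c y) (hz : IsBCInverse d b c z) :
    List.TFAE
      [ IsBCInverse (a * d) b c (z * y),
        z = z * a * d * z * y ∧ z = z * y * a * d * z,
        y = y * a * d * z * y ∧ y = z * y * a * d * y ] := by
  tfae_have 1 → 2 := hz.eq_mul_mul_of_isBCInverse_mul
  tfae_have 2 → 3 := hy.eq_mul_mul_of_eq_mul_mul hz
  tfae_have 3 → 1 := hy.isBCInverse_mul_of_eq_mul_mul hz
  tfae_finish
end
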